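/- arXiv:1603.06827 — 4 statements merged into one kernel-verified Lean document; each statement's English description precedes it below -/
import Mathlib

section
/- Assume there is a constant C > 0 such that for every finite set B ⊂ ℝ with |B| ≥ 2, the number of 8-tuples (b₁,…,b₈) ∈ B⁸ with (b₁+b₂)² - (b₃+b₄)² = (b₅+b₆)² - (b₇+b₈)² is at most C|B|⁶ log|B|. Then for all finite A, B ⊂ ℝ with |B| ≥ 2, E⁺(A) · |A + (B+B)²|² ≥ |A|⁴|B|² / (C log|B|). -/
open Finset Pointwise

/-- The additive energy of `A`: quadruples with `a₁ - a₂ = a₃ - a₄`. -/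
noncomputable def addE (A : Finset ℝ) : ℕ :=
  (((A ×ˢ A) ×ˢ (A ×ˢ A)).filter (fun x => x.1.1 - x.1.2 = x.2.1 - x.2.2)).card

/-- Number of 8-tuples in `B⁸` with `(b₁+b₂)² - (b₃+b₄)² = (b₅+b₆)² - (b₇+b₈)²`. -/
noncomputable def quadEnergy (B : Finset ℝ) : ℕ :=
  ((((B ×ˢ B) ×ˢ (B ×ˢ B)) ×ˢ ((B ×ˢ B) ×ˢ (B ×ˢ B))).filter
    (fun x => (x.1.1.1 + x.1.1.2) ^ 2 - (x.1.2.1 + x.1.2.2) ^ 2 =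
      (x.2.1.1 + x.2.1.2) ^ 2 - (x.2.2.1 + x.2.2.2) ^ 2)).card

/-- The set `A + (B+B)² = {a + (b₁+b₂)² : a ∈ A, b₁, b₂ ∈ B}`. -/
noncomputable def shiftSet (A B : Finset ℝ) : Finset ℝ :=
  (A ×ˢ B ×ˢ B).image (fun x => x.1 + (x.2.1 + x.2.2) ^ 2)

/-!
Let `T` count the solutions of `a + (b₁+b₂)² = a' + (b₃+b₄)²` in `A × B² × A × B²`.
Cauchy–Schwarz over the fibres of `(a, b₁, b₂) ↦ a + (b₁+b₂)²` gives
`(|A||B|²)² ≤ |A + (B+B)²| · T`. The same solutions are those of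
`a - a' = (b₃+b₄)² - (b₁+b₂)²`, so a second Cauchy–Schwarz over the common value gives
`T² ≤ E⁺(A) · Q(B)`, where `Q(B)` is the 8-tuple count bounded by the hypothesis.
-/

section Collisions

variable {α β γ : Type*} [DecidableEq γ]

def collisionCount (s : Finset α) (t : Finset β) (f : α → γ) (g : β → γ) : ℕ :=
  #{p ∈ s ×ˢ t | f p.1 = g p.2}

lemma collisionCount_eq_sum_card_mul_card {s : Finset α} {t : Finset β} {f : α → γ}
    {g : β → γ} {u : Finset γ} (hu : (s : Set α).MapsTo f u) :
    collisionCount s t f g = ∑ x ∈ u, #{a ∈ s | f a = x} * #{b ∈ t | g b = x} := by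
  rw [collisionCount, card_eq_sum_card_fiberwise (f := fun p => f p.1) (t := u)
    fun p hp => hu (mem_product.1 (mem_filter.1 hp).1).1]
  refine sum_congr rfl fun x _ => ?_
  rw [← card_product]
  congr 1
  ext ⟨a, b⟩
  simp only [mem_filter, mem_product]
  constructor
  · rintro ⟨⟨⟨ha, hb⟩, hab⟩, rfl⟩
    exact ⟨⟨ha, rfl⟩, hb, hab.symm⟩
  · rintro ⟨⟨ha, rfl⟩, hb, hbx⟩
    exact ⟨⟨⟨ha, hb⟩, hbx.symm⟩, rfl⟩

lemma card_sq_le_card_image_mul_collisionCount (s : Finset α) (f : α → γ) :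
    #s ^ 2 ≤ #(s.image f) * collisionCount s s f f := by
  have hmaps : (s : Set α).MapsTo f (s.image f) := fun a ha => mem_image_of_mem f ha
  rw [card_eq_sum_card_fiberwise hmaps, collisionCount_eq_sum_card_mul_card hmaps]
  exact sq_sum_le_card_mul_sum_sq.trans_eq (by simp only [sq, Nat.cast_id])

lemma collisionCount_sq_le (s : Finset α) (t : Finset β) (f : α → γ) (g : β → γ) :
    collisionCount s t f g ^ 2 ≤ collisionCount s s f f * collisionCount t t g g := by
  set u := s.image f ∪ t.image g
  have hf : (s : Set α).MapsTo f u := fun a ha => mem_union_left _ (mem_image_of_mem f ha)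
  have hg : (t : Set β).MapsTo g u := fun b hb => mem_union_right _ (mem_image_of_mem g hb)
  rw [collisionCount_eq_sum_card_mul_card hf, collisionCount_eq_sum_card_mul_card hf,
    collisionCount_eq_sum_card_mul_card hg]
  simpa only [sq] using sum_mul_sq_le_sq_mul_sq u _ _

end Collisions

/-- `a + g b = a' + g b'` exactly when `a - a' = g b' - g b`. -/
lemma collisionCount_add_eq {α β G : Type*} [AddCommGroup G] [DecidableEq G]
    (s : Finset α) (t : Finset β) (f : α → G) (g : β → G) :
    collisionCount (s ×ˢ t) (s ×ˢ t) (fun x => f x.1 + g x.2) (fun x => f x.1 + g x.2) =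
      collisionCount (s ×ˢ s) (t ×ˢ t) (fun p => f p.1 - f p.2) (fun q => g q.1 - g q.2) := by
  refine card_bij' (fun x _ => ((x.1.1, x.2.1), (x.2.2, x.1.2)))
    (fun y _ => ((y.1.1, y.2.2), (y.1.2, y.2.1))) ?_ ?_ (fun _ _ => rfl) (fun _ _ => rfl)
  · rintro ⟨⟨a, b⟩, ⟨a', b'⟩⟩ h
    simp only [mem_filter, mem_product] at h ⊢
    exact ⟨by tauto, by rw [sub_eq_sub_iff_add_eq_add, add_comm (g b')]; exact h.2⟩
  · rintro ⟨⟨a, a'⟩, ⟨b', b⟩⟩ h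
    simp only [mem_filter, mem_product] at h ⊢
    rw [sub_eq_sub_iff_add_eq_add, add_comm (g b')] at h
    exact ⟨by tauto, h.2⟩

lemma card_pow_four_le_card_shiftSet_sq_mul (A B : Finset ℝ) :
    (#A * #B ^ 2) ^ 4 ≤ #(shiftSet A B) ^ 2 * (addE A * quadEnergy B) := by
  have hcard : #(A ×ˢ (B ×ˢ B)) = #A * #B ^ 2 := by rw [card_product, card_product, sq]
  have hshift : (#A * #B ^ 2) ^ 2 ≤ #(shiftSet A B) * collisionCount (A ×ˢ A)
      ((B ×ˢ B) ×ˢ (B ×ˢ B)) (fun p => p.1 - p.2)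
      (fun q => (q.1.1 + q.1.2) ^ 2 - (q.2.1 + q.2.2) ^ 2) := by
    rw [← hcard]
    exact (card_sq_le_card_image_mul_collisionCount _ _).trans_eq
      (congrArg _ (collisionCount_add_eq A (B ×ˢ B) (fun a => a) fun b => (b.1 + b.2) ^ 2))
  -- `addE A` and `quadEnergy B` are the two collision counts on the right, definitionally.
  have henergy := collisionCount_sq_le (A ×ˢ A) ((B ×ˢ B) ×ˢ (B ×ˢ B))
    (fun p => p.1 - p.2) (fun q => (q.1.1 + q.1.2) ^ 2 - (q.2.1 + q.2.2) ^ 2)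
  calc (#A * #B ^ 2) ^ 4 = ((#A * #B ^ 2) ^ 2) ^ 2 := by ring
    _ ≤ (#(shiftSet A B) * _) ^ 2 := Nat.pow_le_pow_left hshift 2
    _ = #(shiftSet A B) ^ 2 * _ := mul_pow _ _ 2
    _ ≤ #(shiftSet A B) ^ 2 * (addE A * quadEnergy B) := Nat.mul_le_mul_left _ henergy

theorem stmt2 (C : ℝ) (hC : 0 < C)
    (hGK : ∀ B : Finset ℝ, 2 ≤ B.card →
      (quadEnergy B : ℝ) ≤ C * (B.card : ℝ) ^ 6 * Real.logb 2 B.card) :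
    ∀ A B : Finset ℝ, 2 ≤ B.card →
      (addE A : ℝ) * ((shiftSet A B).card : ℝ) ^ 2 ≥
        (A.card : ℝ) ^ 4 * (B.card : ℝ) ^ 2 / (C * Real.logb 2 B.card) := by
  intro A B hB
  have hlog : 0 < Real.logb 2 B.card :=
    Real.logb_pos one_lt_two (by exact_mod_cast one_lt_two.trans_le hB)
  have hBpos : (0 : ℝ) < #B := by positivity
  have hcount : ((#A : ℝ) * #B ^ 2) ^ 4 ≤
      (#(shiftSet A B) : ℝ) ^ 2 * ((addE A : ℝ) * quadEnergy B) := by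
    exact_mod_cast card_pow_four_le_card_shiftSet_sq_mul A B
  rw [ge_iff_le, div_le_iff₀ (by positivity), ← mul_le_mul_iff_of_pos_right (pow_pos hBpos 6)]
  calc (#A : ℝ) ^ 4 * #B ^ 2 * #B ^ 6 = ((#A : ℝ) * #B ^ 2) ^ 4 := by ring
    _ ≤ (#(shiftSet A B) : ℝ) ^ 2 * ((addE A : ℝ) * quadEnergy B) := hcount
    _ ≤ (#(shiftSet A B) : ℝ) ^ 2 * ((addE A : ℝ) * (C * #B ^ 6 * Real.logb 2 #B)) := by
        gcongr
        exact hGK B hB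
    _ = addE A * #(shiftSet A B) ^ 2 * (C * Real.logb 2 #B) * #B ^ 6 := by ring
end

section
/- Assume (i) there is C₁ > 0 such that for every finite B ⊂ ℝ with |B| ≥ 2, E⁺(A)·|A + (B+B)²|² ≥ |A|⁴|B|²/(C₁ log|B|) for all finite A ⊂ ℝ, and (ii) there is C₂ > 0 such that E*(A) ≤ C₂|A+A|² log|A| for every finite A ⊂ ℝ with |A| ≥ 2 (Solymosi's bound). Then there is c > 0 such that for every finite set A of positive reals with |A| ≥ 2, |{(a₁+a₂+a₃+a₄)² + log a₅ : aᵢ ∈ A}| ≥ c|A|²/log|A|. -/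
/-!
With `L = log₂ A`, the logarithm turns ratios into differences, so `E⁺(L) = E*(A)`, and
`L + (A+A)²` is contained in the expander set `S`. Lemma 2.6 with `B = A + A` gives
`E*(A)·|S|² ≥ |A|⁴|A+A|² / (C₁ log|A+A|)`; Solymosi's bound `E*(A) ≤ C₂|A+A|² log|A|` cancels the
factor `|A+A|²`, and `log|A+A| ≤ 2 log|A|`, leaving `|A|⁴ ≤ 2C₁C₂ (log|A|)² |S|²`.
-/

open Finset Pointwise

/-- The multiplicative energy of `A`: quadruples with `a₁/a₂ = a₃/a₄`, i.e. `a₁a₄ = a₂a₃`. -/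
noncomputable def mulE (A : Finset ℝ) : ℕ :=
  (((A ×ˢ A) ×ˢ (A ×ˢ A)).filter (fun x => x.1.1 * x.2.2 = x.1.2 * x.2.1)).card

/-- The expander set `{(a₁+a₂+a₃+a₄)² + log a₅ : aᵢ ∈ A}` (log base 2). -/
noncomputable def expanderSet (A : Finset ℝ) : Finset ℝ :=
  ((A ×ˢ A) ×ˢ (A ×ˢ A) ×ˢ A).image
    (fun x => (x.1.1 + x.1.2 + x.2.1.1 + x.2.1.2) ^ 2 + Real.logb 2 x.2.2)

theorem addE_image_eq_mulE {A : Finset ℝ} {f : ℝ → ℝ} (hf : Set.InjOn f A)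
    (hfe : ∀ a ∈ A, ∀ b ∈ A, ∀ c ∈ A, ∀ d ∈ A, (f a - f b = f c - f d ↔ a * d = b * c)) :
    addE (A.image f) = mulE A := by
  unfold addE mulE
  symm
  refine card_nbij (fun x => ((f x.1.1, f x.1.2), (f x.2.1, f x.2.2))) ?_ ?_ ?_
  · rintro ⟨⟨a, b⟩, c, d⟩ h
    simp only [mem_coe, mem_filter, mem_product] at h ⊢
    obtain ⟨⟨⟨ha, hb⟩, hc, hd⟩, h⟩ := h
    exact ⟨⟨⟨mem_image_of_mem f ha, mem_image_of_mem f hb⟩, mem_image_of_mem f hc,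
      mem_image_of_mem f hd⟩, (hfe a ha b hb c hc d hd).2 h⟩
  · rintro ⟨⟨a, b⟩, c, d⟩ h ⟨⟨a', b'⟩, c', d'⟩ h' heq
    simp only [mem_coe, mem_filter, mem_product] at h h'
    obtain ⟨⟨⟨ha, hb⟩, hc, hd⟩, -⟩ := h
    obtain ⟨⟨⟨ha', hb'⟩, hc', hd'⟩, -⟩ := h'
    simp only [Prod.mk.injEq] at heq
    obtain ⟨⟨h₁, h₂⟩, h₃, h₄⟩ := heq
    rw [hf ha ha' h₁, hf hb hb' h₂, hf hc hc' h₃, hf hd hd' h₄]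
  · rintro ⟨⟨x, y⟩, z, w⟩ h
    simp only [mem_coe, mem_filter, mem_product, mem_image] at h
    obtain ⟨⟨⟨⟨a, ha, rfl⟩, ⟨b, hb, rfl⟩⟩, ⟨c, hc, rfl⟩, ⟨d, hd, rfl⟩⟩, h⟩ := h
    refine ⟨((a, b), (c, d)), ?_, rfl⟩
    simp only [mem_coe, mem_filter, mem_product]
    exact ⟨⟨⟨ha, hb⟩, hc, hd⟩, (hfe a ha b hb c hc d hd).1 h⟩

theorem Real.logb_sub_logb_eq_logb_sub_logb_iff {b x y z w : ℝ} (hb : 1 < b) (hx : 0 < x)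
    (hy : 0 < y) (hz : 0 < z) (hw : 0 < w) :
    Real.logb b x - Real.logb b y = Real.logb b z - Real.logb b w ↔ x * w = y * z := by
  rw [sub_eq_sub_iff_add_eq_add, ← Real.logb_mul hx.ne' hw.ne', ← Real.logb_mul hz.ne' hy.ne',
    mul_comm y z]
  exact (Real.logb_injOn_pos hb).eq_iff (mul_pos hx hw) (mul_pos hz hy)

theorem addE_image_logb {A : Finset ℝ} {b : ℝ} (hb : 1 < b) (hA : ∀ a ∈ A, 0 < a) :
    addE (A.image (Real.logb b)) = mulE A :=
  addE_image_eq_mulE (fun _ hx _ hy => Real.logb_injOn_pos hb (hA _ hx) (hA _ hy))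
    fun _ ha _ hb' _ hc _ hd =>
      Real.logb_sub_logb_eq_logb_sub_logb_iff hb (hA _ ha) (hA _ hb') (hA _ hc) (hA _ hd)

theorem card_image_logb {A : Finset ℝ} {b : ℝ} (hb : 1 < b) (hA : ∀ a ∈ A, 0 < a) :
    #(A.image (Real.logb b)) = #A :=
  card_image_of_injOn fun _ hx _ hy => Real.logb_injOn_pos hb (hA _ hx) (hA _ hy)

theorem shiftSet_image_logb_add_subset_expanderSet (A : Finset ℝ) :
    shiftSet (A.image (Real.logb 2)) (A + A) ⊆ expanderSet A := by
  intro x hx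
  simp only [shiftSet, mem_image, mem_product] at hx
  obtain ⟨⟨_, s, t⟩, ⟨⟨a₅, ha₅, rfl⟩, hs, ht⟩, rfl⟩ := hx
  obtain ⟨a₁, ha₁, a₂, ha₂, rfl⟩ := mem_add.mp hs
  obtain ⟨a₃, ha₃, a₄, ha₄, rfl⟩ := mem_add.mp ht
  refine mem_image.mpr ⟨((a₁, a₂), (a₃, a₄), a₅), ?_, by ring⟩
  simp only [mem_product]
  exact ⟨⟨ha₁, ha₂⟩, ⟨ha₃, ha₄⟩, ha₅⟩

theorem logb_card_add_le {A : Finset ℝ} (hA : A.Nonempty) :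
    Real.logb 2 #(A + A) ≤ 2 * Real.logb 2 #A := by
  have hsq : (#(A + A) : ℝ) ≤ (#A : ℝ) ^ 2 := by
    rw [sq]; exact_mod_cast card_add_le
  calc Real.logb 2 #(A + A) ≤ Real.logb 2 ((#A : ℝ) ^ 2) :=
        Real.logb_le_logb_of_le one_lt_two (by simpa using hA.add hA) hsq
    _ = 2 * Real.logb 2 #A := by rw [Real.logb_pow]; norm_num

theorem card_pow_four_le_expanderSet {C₁ C₂ : ℝ} (hC₁ : 0 < C₁)
    (H1 : ∀ B : Finset ℝ, 2 ≤ #B → ∀ A : Finset ℝ,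
      (addE A : ℝ) * (#(shiftSet A B) : ℝ) ^ 2 ≥
        (#A : ℝ) ^ 4 * (#B : ℝ) ^ 2 / (C₁ * Real.logb 2 #B))
    (H2 : ∀ A : Finset ℝ, 2 ≤ #A → (mulE A : ℝ) ≤ C₂ * (#(A + A) : ℝ) ^ 2 * Real.logb 2 #A)
    {A : Finset ℝ} (hA : ∀ a ∈ A, 0 < a) (hA2 : 2 ≤ #A) :
    (#A : ℝ) ^ 4 ≤ 2 * C₁ * C₂ * Real.logb 2 #A ^ 2 * (#(expanderSet A) : ℝ) ^ 2 := by
  set n : ℝ := (#A : ℝ)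
  set K : ℝ := (#(A + A) : ℝ)
  set S : ℝ := (#(expanderSet A) : ℝ)
  set l := Real.logb 2 n
  have hAne : A.Nonempty := card_pos.mp (by omega)
  have hK2 : 2 ≤ #(A + A) := hA2.trans (card_le_card_add_left hAne)
  have hK : 0 < K := by unfold K; exact_mod_cast (by omega : 0 < #(A + A))
  have hlK : 0 < Real.logb 2 K :=
    Real.logb_pos one_lt_two (by unfold K; exact_mod_cast (by omega : 1 < #(A + A)))
  have hshift : (#(shiftSet (A.image (Real.logb 2)) (A + A)) : ℝ) ≤ S :=
    Nat.cast_le.mpr (card_le_card (shiftSet_image_logb_add_subset_expanderSet A))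
  have henergy := H1 (A + A) hK2 (A.image (Real.logb 2))
  rw [card_image_logb one_lt_two hA, addE_image_logb one_lt_two hA] at henergy
  have hsolymosi : (0 : ℝ) ≤ C₂ * K ^ 2 * l := (Nat.cast_nonneg _).trans (H2 A hA2)
  have hchain : n ^ 4 * K ^ 2 / (C₁ * Real.logb 2 K) ≤ C₂ * K ^ 2 * l * S ^ 2 :=
    calc n ^ 4 * K ^ 2 / (C₁ * Real.logb 2 K)
        ≤ mulE A * (#(shiftSet (A.image (Real.logb 2)) (A + A)) : ℝ) ^ 2 := henergy
      _ ≤ C₂ * K ^ 2 * l * S ^ 2 := by gcongr; exact H2 A hA2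
  rw [div_le_iff₀ (by positivity)] at hchain
  have : n ^ 4 * K ^ 2 ≤ (2 * C₁ * C₂ * l ^ 2 * S ^ 2) * K ^ 2 :=
    calc n ^ 4 * K ^ 2 ≤ C₂ * K ^ 2 * l * S ^ 2 * (C₁ * Real.logb 2 K) := hchain
      _ ≤ C₂ * K ^ 2 * l * S ^ 2 * (C₁ * (2 * l)) := by gcongr; exact logb_card_add_le hAne
      _ = (2 * C₁ * C₂ * l ^ 2 * S ^ 2) * K ^ 2 := by ring
  exact le_of_mul_le_mul_right this (by positivity)

theorem stmt4
    (h1 : ∃ C₁ > (0:ℝ), ∀ B : Finset ℝ, 2 ≤ B.card → ∀ A : Finset ℝ,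
      (addE A : ℝ) * ((shiftSet A B).card : ℝ) ^ 2 ≥
        (A.card : ℝ) ^ 4 * (B.card : ℝ) ^ 2 / (C₁ * Real.logb 2 B.card))
    (h2 : ∃ C₂ > (0:ℝ), ∀ A : Finset ℝ, 2 ≤ A.card →
      (mulE A : ℝ) ≤ C₂ * ((A + A).card : ℝ) ^ 2 * Real.logb 2 A.card) :
    ∃ c > (0:ℝ), ∀ A : Finset ℝ, (∀ a ∈ A, (0:ℝ) < a) → 2 ≤ A.card →
      ((expanderSet A).card : ℝ) ≥ c * (A.card : ℝ) ^ 2 / Real.logb 2 A.card := by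
  obtain ⟨C₁, hC₁, H1⟩ := h1
  obtain ⟨C₂, hC₂, H2⟩ := h2
  have hC : 0 < Real.sqrt (2 * C₁ * C₂) := by positivity
  refine ⟨(Real.sqrt (2 * C₁ * C₂))⁻¹, inv_pos.mpr hC, fun A hA hA2 => ?_⟩
  have hl : 0 < Real.logb 2 #A :=
    Real.logb_pos one_lt_two (by exact_mod_cast (by omega : 1 < #A))
  have hsq : ((#A : ℝ) ^ 2) ^ 2 ≤
      (Real.sqrt (2 * C₁ * C₂) * Real.logb 2 #A * #(expanderSet A)) ^ 2 := by
    rw [mul_pow, mul_pow, Real.sq_sqrt (by positivity), ← pow_mul]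
    exact card_pow_four_le_expanderSet hC₁ H1 H2 hA hA2
  have := (pow_le_pow_iff_left₀ (by positivity) (by positivity) two_ne_zero).mp hsq
  rw [ge_iff_le, inv_mul_eq_div, div_div, div_le_iff₀ (by positivity)]
  linarith
end

section
/- Assume (i) Lemma 2.4: E*(A)|A(B+C)|² ≥ c₁|A|⁴|B||C|/log|A| for all finite A,B,C ⊂ ℝ with |A| ≥ 2, and (ii) Lemma 4.4 (difference part): if E*(A) ≥ |A|³/K with K ≥ 1 then |A-A| ≥ c₂|A|^{8/5}/(K^{6/5}(log|A|)^{C}). Then there are constants c, C' > 0 such that for every finite set A of nonzero reals with |A| ≥ 2, |A(A-A)| ≥ c|A|^{3/2 + 1/34}/(log|A|)^{C'}. -/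
/-!
Split according to whether `E*(A) ≤ |A|^{3-1/17}`. If so, Lemma 2.4 with `B = A`, `C = -A` gives
`E*(A)|A(A-A)|² ≳ |A|⁶/log|A|`, hence `|A(A-A)|² ≳ |A|^{3+1/17}/log|A|`. Otherwise Lemma 4.4 with
`K = |A|^{1/17}` gives `|A-A| ≳ |A|^{8/5-6/85}/(log|A|)^C`, and `A(A-A)` contains the dilate
`a(A-A)`, of the same size since `0 ∉ A`. Both exponents equal `3/2 + 1/34`.
-/

open Finset Pointwise

/-- The multiplicative energy written as `Σ_x |A ∩ xA|²`. -/
noncomputable def mulER (A : Finset ℝ) : ℝ :=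
  ∑ x ∈ A / A, ((A ∩ A.image (fun a => x * a)).card : ℝ) ^ 2

/-- The set `A(B+C) = {a(b+c) : a ∈ A, b ∈ B, c ∈ C}`. -/
noncomputable def prodSumSet (A B C : Finset ℝ) : Finset ℝ :=
  (A ×ˢ B ×ˢ C).image (fun x => x.1 * (x.2.1 + x.2.2))

/-- The set `A(A-A) = {a(b-c) : a, b, c ∈ A}`. -/
noncomputable def prodDiffSet (A : Finset ℝ) : Finset ℝ :=
  (A ×ˢ A ×ˢ A).image (fun x => x.1 * (x.2.1 - x.2.2))

lemma prodSumSet_self_neg (A : Finset ℝ) : prodSumSet A A (-A) = prodDiffSet A := by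
  ext z
  simp only [prodSumSet, prodDiffSet, mem_image, mem_product, mem_neg]
  constructor
  · rintro ⟨⟨a, b, c⟩, ⟨ha, hb, d, hd, rfl⟩, rfl⟩
    exact ⟨(a, b, d), ⟨ha, hb, hd⟩, by ring⟩
  · rintro ⟨⟨a, b, c⟩, ⟨ha, hb, hc⟩, rfl⟩
    exact ⟨(a, b, -c), ⟨ha, hb, c, hc, rfl⟩, by ring⟩

lemma card_sub_le_card_prodDiffSet {A : Finset ℝ} {a : ℝ} (ha : a ∈ A) (ha0 : a ≠ 0) :
    #(A - A) ≤ #(prodDiffSet A) := by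
  refine card_le_card_of_injOn (a * ·) ?_ fun _ _ _ _ h => mul_left_cancel₀ ha0 h
  intro d hd
  obtain ⟨b, hb, c, hc, rfl⟩ := mem_sub.mp hd
  exact mem_image.mpr ⟨(a, b, c), mem_product.mpr ⟨ha, mem_product.mpr ⟨hb, hc⟩⟩, rfl⟩

lemma rpow_eight_fifths_eq {N : ℝ} (hN : 0 < N) :
    N ^ ((8:ℝ)/5) = N ^ ((3:ℝ)/2 + 1/34) * (N ^ ((1:ℝ)/17)) ^ ((6:ℝ)/5) := by
  rw [← Real.rpow_mul hN.le, ← Real.rpow_add hN]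
  norm_num

lemma rpow_sq_eq_pow_three_mul {N : ℝ} (hN : 0 < N) :
    (N ^ ((3:ℝ)/2 + 1/34)) ^ 2 = N ^ 3 * N ^ ((1:ℝ)/17) := by
  rw [← Real.rpow_natCast, ← Real.rpow_mul hN.le, ← Real.rpow_natCast N 3, ← Real.rpow_add hN]
  norm_num

lemma sqrt_mul_rpow_div_sqrt_le {c₁ N L E P : ℝ} (hN : 0 < N) (hL : 0 < L)
    (hE : E ≤ N ^ 3 / N ^ ((1:ℝ)/17)) (h : c₁ * N ^ 4 * N * N / L ≤ E * P ^ 2) (hP : 0 ≤ P) :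
    √c₁ * N ^ ((3:ℝ)/2 + 1/34) / √L ≤ P := by
  set M := N ^ ((1:ℝ)/17)
  have hM : 0 < M := by positivity
  have hP2 : c₁ * (N ^ 3 * M) / L ≤ P ^ 2 :=
    calc c₁ * (N ^ 3 * M) / L = c₁ * N ^ 4 * N * N / L * (M / N ^ 3) := by
          field_simp
      _ ≤ E * P ^ 2 * (M / N ^ 3) := by gcongr
      _ ≤ N ^ 3 / M * P ^ 2 * (M / N ^ 3) := by gcongr
      _ = P ^ 2 := by field_simp
  have hsqrt : √c₁ * N ^ ((3:ℝ)/2 + 1/34) / √L = √(c₁ * (N ^ 3 * M) / L) := by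
    rw [Real.sqrt_div' _ hL.le, Real.sqrt_mul' _ (by positivity), ← rpow_sq_eq_pow_three_mul hN,
      Real.sqrt_sq (by positivity)]
  rw [hsqrt]
  exact (Real.sqrt_le_left hP).2 hP2

theorem stmt17_general (c₁ c₂ C : ℝ) (hc₁ : 0 < c₁) (hc₂ : 0 < c₂)
    (h1 : ∀ A B C' : Finset ℝ, 2 ≤ A.card →
      mulER A * ((prodSumSet A B C').card : ℝ) ^ 2 ≥
        c₁ * (A.card : ℝ) ^ 4 * (B.card : ℝ) * (C'.card : ℝ) / Real.logb 2 A.card)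
    (h2 : ∀ A : Finset ℝ, ∀ K : ℝ, (0:ℝ) ∉ A → 2 ≤ A.card → 1 ≤ K →
      mulER A ≥ (A.card : ℝ) ^ 3 / K →
      ((A - A).card : ℝ) ≥
        c₂ * (A.card : ℝ) ^ ((8:ℝ)/5) / (K ^ ((6:ℝ)/5) * (Real.logb 2 A.card) ^ C)) :
    ∃ c > (0:ℝ), ∃ C' > (0:ℝ), ∀ A : Finset ℝ, (0:ℝ) ∉ A → 2 ≤ A.card →
      ((prodDiffSet A).card : ℝ) ≥
        c * (A.card : ℝ) ^ ((3:ℝ)/2 + 1/34) / (Real.logb 2 A.card) ^ C' := by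
  refine ⟨min √c₁ c₂, lt_min (Real.sqrt_pos.2 hc₁) hc₂, max C (1/2),
    lt_max_of_lt_right one_half_pos, fun A hA0 hA2 => ?_⟩
  have hN : (2:ℝ) ≤ #A := mod_cast hA2
  have hL : 1 ≤ Real.logb 2 #A := (Real.le_logb_iff_rpow_le one_lt_two (by positivity)).2 (by simpa)
  obtain ⟨a, ha⟩ := card_pos.mp (by omega : 0 < #A)
  have hsub : (#(A - A) : ℝ) ≤ #(prodDiffSet A) :=
    mod_cast card_sub_le_card_prodDiffSet ha (ne_of_mem_of_not_mem ha hA0)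
  rcases le_or_gt (mulER A) (#A ^ 3 / (#A : ℝ) ^ ((1:ℝ)/17)) with hE | hE
  · have hprod := h1 A A (-A) hA2
    rw [prodSumSet_self_neg, card_neg] at hprod
    calc min √c₁ c₂ * (#A : ℝ) ^ ((3:ℝ)/2 + 1/34) / Real.logb 2 #A ^ max C (1/2)
        ≤ √c₁ * (#A : ℝ) ^ ((3:ℝ)/2 + 1/34) / √(Real.logb 2 #A) := by
          rw [Real.sqrt_eq_rpow (Real.logb 2 #A)]
          gcongr
          · exact min_le_left _ _
          · exact le_max_right _ _
      _ ≤ #(prodDiffSet A) :=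
          sqrt_mul_rpow_div_sqrt_le (by positivity) (by positivity) hE hprod (by positivity)
  · have hdiff := h2 A _ hA0 hA2 (Real.one_le_rpow (by linarith) (by norm_num)) hE.le
    calc min √c₁ c₂ * (#A : ℝ) ^ ((3:ℝ)/2 + 1/34) / Real.logb 2 #A ^ max C (1/2)
        ≤ c₂ * (#A : ℝ) ^ ((3:ℝ)/2 + 1/34) / Real.logb 2 #A ^ C := by
          gcongr
          · exact min_le_right _ _
          · exact le_max_left _ _
      _ = c₂ * (#A : ℝ) ^ ((8:ℝ)/5) /
            (((#A : ℝ) ^ ((1:ℝ)/17)) ^ ((6:ℝ)/5) * Real.logb 2 #A ^ C) := by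
          rw [rpow_eight_fifths_eq (by positivity)]
          field_simp
      _ ≤ #(A - A) := hdiff
      _ ≤ #(prodDiffSet A) := hsub

theorem stmt17 (c₁ c₂ C : ℝ) (hc₁ : 0 < c₁) (hc₂ : 0 < c₂) (hC : 0 < C)
    (h1 : ∀ A B C' : Finset ℝ, 2 ≤ A.card →
      mulER A * ((prodSumSet A B C').card : ℝ) ^ 2 ≥
        c₁ * (A.card : ℝ) ^ 4 * (B.card : ℝ) * (C'.card : ℝ) / Real.logb 2 A.card)
    (h2 : ∀ A : Finset ℝ, ∀ K : ℝ, (0:ℝ) ∉ A → 2 ≤ A.card → 1 ≤ K →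
      mulER A ≥ (A.card : ℝ) ^ 3 / K →
      ((A - A).card : ℝ) ≥
        c₂ * (A.card : ℝ) ^ ((8:ℝ)/5) / (K ^ ((6:ℝ)/5) * (Real.logb 2 A.card) ^ C)) :
    ∃ c > (0:ℝ), ∃ C' > (0:ℝ), ∀ A : Finset ℝ, (0:ℝ) ∉ A → 2 ≤ A.card →
      ((prodDiffSet A).card : ℝ) ≥
        c * (A.card : ℝ) ^ ((3:ℝ)/2 + 1/34) / (Real.logb 2 A.card) ^ C' :=
  stmt17_general c₁ c₂ C hc₁ hc₂ h1 h2
end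

section
/- Assume (i) Lemma 2.4: E*(A)|A(B+C)|² ≥ c₁|A|⁴|B||C|/log|A| for all finite A,B,C ⊂ ℝ with |A| ≥ 2, and (ii) Lemma 4.4 (sum part): if E*(A) ≥ |A|³/K with K ≥ 1 then |A+A| ≥ c₂|A|^{58/37}/(K^{42/37}(log|A|)^{C}). Then there are constants c, C' > 0 such that for every finite set A of nonzero reals with |A| ≥ 2, |A(A+A)| ≥ c|A|^{3/2 + 5/242}/(log|A|)^{C'}. -/
/-!
Split according to the size of the multiplicative energy, measured by `K = |A|^{5/121}`.
If `E*(A) ≤ |A|³/K`, Lemma 2.4 with `B = C = A` gives `|A(A+A)|² ≳ K|A|³/log|A| = |A|^{2e}/log|A|`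
with `e = 3/2 + 5/242`. Otherwise Lemma 4.4 applies with this `K`, and since `a₀(A+A) ⊆ A(A+A)`
for any `a₀ ∈ A`, `|A(A+A)| ≥ |A+A| ≳ |A|^{58/37 - (5/121)(42/37)} = |A|^e` up to logarithms.
The exponent `5/121` is exactly the one that balances the two cases.
-/

open Finset Pointwise

/-- Lemma 2.4 of the paper, with constant `c₁`. -/
def ProdSumEnergyBound (c₁ : ℝ) : Prop :=
  ∀ A B C' : Finset ℝ, 2 ≤ A.card →
    mulER A * ((prodSumSet A B C').card : ℝ) ^ 2 ≥
      c₁ * (A.card : ℝ) ^ 4 * (B.card : ℝ) * (C'.card : ℝ) / Real.logb 2 A.card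

theorem one_le_logb_two_of_two_le {x : ℝ} (hx : 2 ≤ x) : 1 ≤ Real.logb 2 x := by
  rw [Real.le_logb_iff_rpow_le one_lt_two (by linarith)]
  simpa using hx

theorem card_add_le_card_prodSumSet {A : Finset ℝ} {a : ℝ} (ha : a ∈ A) (ha₀ : a ≠ 0)
    (B C : Finset ℝ) : (B + C).card ≤ (prodSumSet A B C).card := by
  refine card_le_card_of_injOn (a * ·) (fun x hx => ?_) (mul_right_injective₀ ha₀).injOn
  obtain ⟨b, hb, c, hc, rfl⟩ := mem_add.mp hx
  exact mem_image.mpr ⟨(a, b, c), by simp [ha, hb, hc]⟩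

theorem ProdSumEnergyBound.le_sq_card_prodSumSet {c₁ : ℝ} (h : ProdSumEnergyBound c₁)
    {A : Finset ℝ} (hA : 2 ≤ A.card) (B C : Finset ℝ) {K : ℝ} (hK : 0 < K)
    (hE : mulER A ≤ (A.card : ℝ) ^ 3 / K) :
    c₁ * K * A.card * B.card * C.card / Real.logb 2 A.card ≤
      ((prodSumSet A B C).card : ℝ) ^ 2 := by
  have hn : (0 : ℝ) < A.card := by exact_mod_cast (by omega : 0 < A.card)
  have hL : 0 < Real.logb 2 A.card :=
    one_pos.trans_le (one_le_logb_two_of_two_le (by exact_mod_cast hA))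
  have key := (h A B C hA).le.trans (mul_le_mul_of_nonneg_right hE (sq_nonneg _))
  rw [div_mul_eq_mul_div, le_div_iff₀ hK, div_mul_eq_mul_div, div_le_iff₀ hL] at key
  rw [div_le_iff₀ hL]
  nlinarith [pow_pos hn 3]

theorem div_rpow_le_div_rpow {c c' C C' x L : ℝ} (hc' : 0 ≤ c') (hx : 0 ≤ x) (hL : 1 ≤ L)
    (hc : c ≤ c') (hC : C ≤ C') : c * x / L ^ C' ≤ c' * x / L ^ C :=
  div_le_div₀ (mul_nonneg hc' hx) (mul_le_mul_of_nonneg_right hc hx)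
    (Real.rpow_pos_of_pos (one_pos.trans_le hL) C) (Real.rpow_le_rpow_of_exponent_le hL hC)

theorem sqrt_mul_rpow_div_le_of_le_sq {c₁ n L P : ℝ} (hc₁ : 0 ≤ c₁) (hn : 0 < n) (hL : 0 < L)
    (hP : 0 ≤ P) (h : c₁ * n ^ ((5 : ℝ) / 121) * n ^ 3 / L ≤ P ^ 2) :
    √c₁ * n ^ ((3 : ℝ) / 2 + 5 / 242) / L ^ ((1 : ℝ) / 2) ≤ P := by
  refine le_of_pow_le_pow_left₀ two_ne_zero hP (le_of_eq_of_le ?_ h)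
  rw [div_pow, mul_pow, ← Real.sqrt_eq_rpow, Real.sq_sqrt hL.le, Real.sq_sqrt hc₁,
    ← Real.rpow_natCast, ← Real.rpow_mul hn.le, mul_assoc, ← Real.rpow_natCast n 3,
    ← Real.rpow_add hn]
  norm_num

theorem mul_rpow_div_rpow_mul_eq {c₂ n L C : ℝ} (hn : 0 < n) :
    c₂ * n ^ ((58 : ℝ) / 37) / ((n ^ ((5 : ℝ) / 121)) ^ ((42 : ℝ) / 37) * L ^ C) =
      c₂ * n ^ ((3 : ℝ) / 2 + 5 / 242) / L ^ C := by
  rw [← Real.rpow_mul hn.le, ← div_div, mul_div_assoc, ← Real.rpow_sub hn]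
  norm_num

theorem stmt18_general (c₁ c₂ C : ℝ) (hc₁ : 0 < c₁) (hc₂ : 0 < c₂)
    (h1 : ∀ A B C' : Finset ℝ, 2 ≤ A.card →
      mulER A * ((prodSumSet A B C').card : ℝ) ^ 2 ≥
        c₁ * (A.card : ℝ) ^ 4 * (B.card : ℝ) * (C'.card : ℝ) / Real.logb 2 A.card)
    (h2 : ∀ A : Finset ℝ, ∀ K : ℝ, (0:ℝ) ∉ A → 2 ≤ A.card → 1 ≤ K →
      mulER A ≥ (A.card : ℝ) ^ 3 / K →
      ((A + A).card : ℝ) ≥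
        c₂ * (A.card : ℝ) ^ ((58:ℝ)/37) / (K ^ ((42:ℝ)/37) * (Real.logb 2 A.card) ^ C)) :
    ∃ c > (0:ℝ), ∃ C' > (0:ℝ), ∀ A : Finset ℝ, (0:ℝ) ∉ A → 2 ≤ A.card →
      ((prodSumSet A A A).card : ℝ) ≥
        c * (A.card : ℝ) ^ ((3:ℝ)/2 + 5/242) / (Real.logb 2 A.card) ^ C' := by
  refine ⟨min √c₁ c₂, lt_min (Real.sqrt_pos.mpr hc₁) hc₂, max C (1 / 2),
    lt_max_of_lt_right one_half_pos, fun A hA₀ hA => ?_⟩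
  obtain ⟨a, ha⟩ := card_pos.mp (by omega : 0 < A.card)
  have hn : (2 : ℝ) ≤ A.card := by exact_mod_cast hA
  have hL := one_le_logb_two_of_two_le hn
  set K : ℝ := (A.card : ℝ) ^ ((5 : ℝ) / 121)
  have hK : 1 ≤ K := Real.one_le_rpow (by linarith) (by norm_num)
  rcases le_or_gt (mulER A) ((A.card : ℝ) ^ 3 / K) with hE | hE
  · have hP := ProdSumEnergyBound.le_sq_card_prodSumSet h1 hA A A (by positivity) hE
    calc _ ≤ √c₁ * (A.card : ℝ) ^ ((3 : ℝ) / 2 + 5 / 242) / Real.logb 2 A.card ^ ((1 : ℝ) / 2) :=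
          div_rpow_le_div_rpow (Real.sqrt_nonneg _) (by positivity) hL (min_le_left _ _)
            (le_max_right _ _)
      _ ≤ _ := sqrt_mul_rpow_div_le_of_le_sq hc₁.le (by linarith) (by linarith) (by positivity)
          (by convert hP using 1; ring)
  · calc _ ≤ c₂ * (A.card : ℝ) ^ ((3 : ℝ) / 2 + 5 / 242) / Real.logb 2 A.card ^ C :=
          div_rpow_le_div_rpow hc₂.le (by positivity) hL (min_le_right _ _) (le_max_left _ _)
      _ = _ := (mul_rpow_div_rpow_mul_eq (by linarith)).symm
      _ ≤ ((A + A).card : ℝ) := h2 A K hA₀ hA hK hE.le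
      _ ≤ _ := by exact_mod_cast card_add_le_card_prodSumSet ha (ne_of_mem_of_not_mem ha hA₀) A A

theorem stmt18 (c₁ c₂ C : ℝ) (hc₁ : 0 < c₁) (hc₂ : 0 < c₂) (hC : 0 < C)
    (h1 : ∀ A B C' : Finset ℝ, 2 ≤ A.card →
      mulER A * ((prodSumSet A B C').card : ℝ) ^ 2 ≥
        c₁ * (A.card : ℝ) ^ 4 * (B.card : ℝ) * (C'.card : ℝ) / Real.logb 2 A.card)
    (h2 : ∀ A : Finset ℝ, ∀ K : ℝ, (0:ℝ) ∉ A → 2 ≤ A.card → 1 ≤ K →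
      mulER A ≥ (A.card : ℝ) ^ 3 / K →
      ((A + A).card : ℝ) ≥
        c₂ * (A.card : ℝ) ^ ((58:ℝ)/37) / (K ^ ((42:ℝ)/37) * (Real.logb 2 A.card) ^ C)) :
    ∃ c > (0:ℝ), ∃ C' > (0:ℝ), ∀ A : Finset ℝ, (0:ℝ) ∉ A → 2 ≤ A.card →
      ((prodSumSet A A A).card : ℝ) ≥
        c * (A.card : ℝ) ^ ((3:ℝ)/2 + 5/242) / (Real.logb 2 A.card) ^ C' :=
  stmt18_general c₁ c₂ C hc₁ hc₂ h1 h2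
end
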